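/- Let G be a connected split graph with maximal clique K, |K| ≥ 3, and exactly 4 pendant vertices y₀, y₁, y₂, y₃, all adjacent to the same clique vertex x₀. Then rc(G) = 4. -/

import Mathlib

/-!
Colour each pendant edge `x₀ yᵢ` with `i`. Pick two further clique vertices `a`, `b`; inside `K`
colour `x₀ a` with 2, the other edges at `x₀` with 3, the other edges at `a` with 0 and all
remaining clique edges with 2. Then any two clique vertices are joined by a rainbow walk in colours
`{2, 3}` (through `x₀` when their edge has colour 0), and `x₀` reaches every clique vertex by a
rainbow walk avoiding colour 1 and any one prescribed colour (the detours `x₀ b a` and `x₀ a v`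
avoid 2 and 3). A vertex `s ∉ K` that is not a pendant has at least two neighbours, all in `K`;
colour its edge to one of them, `f s`, with 0 and its other edges with 1. Any two vertices are then
joined by entering `K` through a pendant edge or an edge of colour 1, crossing `K` as above, and
leaving it through an edge of colour 0 or 1.

Conversely, two pendant edges at `x₀` lie on every walk between their pendants, so the four
pendant edges need four colours.
-/

open SimpleGraph Finset

/-- An edge colouring `c` makes `G` rainbow connected: every pair of vertices is joined
by a walk whose edges have pairwise distinct colours. -/
def IsRainbow {V : Type*} {α : Type*} (G : SimpleGraph V) (c : Sym2 V → α) : Prop :=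
  ∀ u v : V, ∃ p : G.Walk u v, (p.edges.map c).Nodup

/-- `G` can be rainbow coloured using `k` colours. -/
def RainbowColorable {V : Type*} (G : SimpleGraph V) (k : ℕ) : Prop :=
  ∃ c : Sym2 V → ℕ, (∀ e ∈ G.edgeSet, c e < k) ∧ IsRainbow G c

/-- The rainbow connection number of `G`. -/
noncomputable def rc {V : Type*} (G : SimpleGraph V) : ℕ :=
  sInf {k | RainbowColorable G k}

/-- A set of vertices is independent. -/
def IsIndepSet' {V : Type*} (G : SimpleGraph V) (s : Set V) : Prop :=
  ∀ u ∈ s, ∀ v ∈ s, ¬ G.Adj u v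

section RainbowWalks

variable {V α : Type*} {G : SimpleGraph V} {c : Sym2 V → α}

def RainbowJoined (G : SimpleGraph V) (c : Sym2 V → α) (u v : V) : Prop :=
  ∃ p : G.Walk u v, (p.edges.map c).Nodup

lemma RainbowJoined.refl (u : V) : RainbowJoined G c u u :=
  ⟨.nil, by simp⟩

lemma RainbowJoined.symm {u v : V} (h : RainbowJoined G c u v) : RainbowJoined G c v u := by
  obtain ⟨p, hp⟩ := h
  exact ⟨p.reverse, by rwa [Walk.edges_reverse, List.map_reverse, List.nodup_reverse]⟩

def IsRainbowWalkIn (c : Sym2 V → α) (S : Set α) {u v : V} (p : G.Walk u v) : Prop :=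
  (p.edges.map c).Nodup ∧ ∀ e ∈ p.edges, c e ∈ S

namespace IsRainbowWalkIn

variable {S T : Set α} {u v w : V} {p : G.Walk u v}

lemma rainbowJoined (hp : IsRainbowWalkIn c S p) : RainbowJoined G c u v :=
  ⟨p, hp.1⟩

lemma mono (hp : IsRainbowWalkIn c S p) (hST : S ⊆ T) : IsRainbowWalkIn c T p :=
  ⟨hp.1, fun e he => hST (hp.2 e he)⟩

lemma colour_not_mem (hp : IsRainbowWalkIn c S p) {x : α} (hx : x ∉ S) : x ∉ p.edges.map c :=
  fun h => by obtain ⟨e, he, rfl⟩ := List.mem_map.1 h; exact hx (hp.2 e he)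

lemma nil (S : Set α) (u : V) : IsRainbowWalkIn c S (Walk.nil : G.Walk u u) := by
  simp [IsRainbowWalkIn]

lemma cons (h : G.Adj w u) (hp : IsRainbowWalkIn c S p) (hc : c s(w, u) ∉ S) :
    IsRainbowWalkIn c (insert (c s(w, u)) S) (.cons h p) := by
  refine ⟨?_, fun e he => ?_⟩
  · simpa [hp.1] using hp.colour_not_mem hc
  · rcases List.mem_cons.1 (Walk.edges_cons h p ▸ he) with rfl | he
    exacts [Set.mem_insert _ _, Set.mem_insert_of_mem _ (hp.2 e he)]

lemma concat (hp : IsRainbowWalkIn c S p) (h : G.Adj v w) (hc : c s(v, w) ∉ S) :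
    IsRainbowWalkIn c (insert (c s(v, w)) S) (p.concat h) := by
  refine ⟨?_, fun e he => ?_⟩
  · simpa [Walk.edges_concat, List.nodup_append, hp.1] using hp.colour_not_mem hc
  · rw [Walk.edges_concat, List.concat_eq_append, List.mem_append, List.mem_singleton] at he
    rcases he with he | rfl
    exacts [Set.mem_insert_of_mem _ (hp.2 e he), Set.mem_insert _ _]

end IsRainbowWalkIn

lemma rainbowJoined_of_adj_of_adj {S : Set α} {u u' v v' : V}
    (hu : G.Adj u u') (hv : G.Adj v v') {p : G.Walk u' v'} (hp : IsRainbowWalkIn c S p)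
    (hcu : c s(u, u') ∉ S) (hcv : c s(v, v') ∉ S) (hne : c s(u, u') ≠ c s(v, v')) :
    RainbowJoined G c u v := by
  have hp' := hp.concat hv.symm (by rwa [Sym2.eq_swap])
  exact (hp'.cons hu (by simp [Sym2.eq_swap, hcu, hne])).rainbowJoined

end RainbowWalks

section LowerBound

variable {V ι : Type*} {G : SimpleGraph V}

lemma mem_edges_of_forall_adj_eq {x u v : V} (hu : ∀ w, G.Adj u w → w = x) (huv : u ≠ v)
    (p : G.Walk u v) : s(u, x) ∈ p.edges := by
  cases p with
  | nil => exact absurd rfl huv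
  | cons h q => simp [hu _ h]

lemma IsRainbow.injective_colour_pendants {α : Type*} {c : Sym2 V → α} (hr : IsRainbow G c)
    {x : V} {y : ι → V} (hy : Function.Injective y) (hadj : ∀ i, G.Adj x (y i))
    (hpend : ∀ i w, G.Adj (y i) w → w = x) : Function.Injective fun i => c s(y i, x) := by
  intro i j hij
  by_contra hne
  have hyij : y i ≠ y j := hy.ne hne
  obtain ⟨p, hp⟩ := hr (y i) (y j)
  have hi := mem_edges_of_forall_adj_eq (hpend i) hyij p
  have hj := mem_edges_of_forall_adj_eq (hpend j) hyij.symm p.reverse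
  rw [Walk.edges_reverse, List.mem_reverse] at hj
  rcases Sym2.eq_iff.1 (List.inj_on_of_nodup_map hp hi hj hij) with ⟨h, -⟩ | ⟨h, -⟩
  exacts [hyij h, (hadj i).ne' h]

lemma le_of_rainbowColorable_of_pendants {n k : ℕ} {x : V} {y : Fin n → V}
    (hy : Function.Injective y) (hadj : ∀ i, G.Adj x (y i))
    (hpend : ∀ i w, G.Adj (y i) w → w = x) (h : RainbowColorable G k) : n ≤ k := by
  obtain ⟨c, hc, hr⟩ := h
  have hinj := hr.injective_colour_pendants hy hadj hpend
  simpa using Fintype.card_le_of_injective (fun i => (⟨c s(y i, x), hc _ (hadj i).symm⟩ : Fin k))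
    fun i j h => hinj (Fin.mk.inj_iff.1 h)

lemma rc_eq_of_rainbowColorable {k : ℕ} (h : RainbowColorable G k)
    (hmin : ∀ m, RainbowColorable G m → k ≤ m) : rc G = k :=
  IsLeast.csInf_eq ⟨h, hmin⟩

end LowerBound

section CliqueColouring

variable {V : Type*} [DecidableEq V] {G : SimpleGraph V} {K : Set V} {x₀ a b u v : V}
  {c : Sym2 V → ℕ}

def cliqueColour (x₀ a u v : V) : ℕ :=
  if u = x₀ ∨ v = x₀ then (if u = a ∨ v = a then 2 else 3)
  else if u = a ∨ v = a then 0 else 2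

lemma cliqueColour_comm (u v : V) : cliqueColour x₀ a u v = cliqueColour x₀ a v u := by
  simp only [cliqueColour, or_comm]

lemma cliqueColour_eq_zero_or_two_or_three (u v : V) :
    cliqueColour x₀ a u v = 0 ∨ cliqueColour x₀ a u v = 2 ∨ cliqueColour x₀ a u v = 3 := by
  unfold cliqueColour; split_ifs <;> simp

lemma cliqueColour_eq_zero_iff :
    cliqueColour x₀ a u v = 0 ↔ u ≠ x₀ ∧ v ≠ x₀ ∧ (u = a ∨ v = a) := by
  unfold cliqueColour; split_ifs <;> simp <;> tauto

lemma cliqueColour_x₀_a : cliqueColour x₀ a x₀ a = 2 := by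
  simp [cliqueColour]

lemma cliqueColour_x₀_of_ne_a (hax : a ≠ x₀) (hv : v ≠ a) : cliqueColour x₀ a x₀ v = 3 := by
  simp [cliqueColour, hv, hax.symm]

lemma cliqueColour_a_of_ne_x₀ (hax : a ≠ x₀) (hv : v ≠ x₀) : cliqueColour x₀ a a v = 0 := by
  simp [cliqueColour, hax, hv]

lemma exists_isRainbowWalkIn_two_three (hK : G.IsClique K)
    (hc : ∀ u ∈ K, ∀ v ∈ K, c s(u, v) = cliqueColour x₀ a u v) (hx₀ : x₀ ∈ K)
    (hax : a ≠ x₀) (hu : u ∈ K) (hv : v ∈ K) : ∃ p : G.Walk u v, IsRainbowWalkIn c {2, 3} p := by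
  by_cases huv : u = v
  · subst huv; exact ⟨.nil, .nil _ _⟩
  rcases cliqueColour_eq_zero_or_two_or_three (x₀ := x₀) (a := a) u v with h0 | h23
  · obtain ⟨hux, hvx, rfl | rfl⟩ := cliqueColour_eq_zero_iff.1 h0 <;>
    refine ⟨_, (((IsRainbowWalkIn.nil ∅ v).cons (hK hx₀ hv hvx.symm) ?_).cons
        (hK hu hx₀ hux) ?_).mono ?_⟩ <;>
    simp [hc _ hu _ hx₀, hc _ hx₀ _ hv, cliqueColour_comm u x₀, cliqueColour_x₀_a,
      cliqueColour_x₀_of_ne_a hax, huv, Ne.symm huv, Set.insert_subset_iff]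
  · refine ⟨_, ((IsRainbowWalkIn.nil ∅ v).cons (hK hu hv huv) (by simp)).mono ?_⟩
    simpa [hc u hu v hv] using h23

lemma exists_isRainbowWalkIn_compl (hK : G.IsClique K)
    (hc : ∀ u ∈ K, ∀ v ∈ K, c s(u, v) = cliqueColour x₀ a u v) (hx₀ : x₀ ∈ K) (ha : a ∈ K)
    (hax : a ≠ x₀) (hb : b ∈ K) (hbx : b ≠ x₀) (hba : b ≠ a) (j : ℕ) (hv : v ∈ K) :
    ∃ p : G.Walk x₀ v, IsRainbowWalkIn c {1, j}ᶜ p := by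
  have hxa := hK hx₀ ha hax.symm
  by_cases hvx : v = x₀
  · subst hvx; exact ⟨.nil, .nil _ _⟩
  by_cases hva : v = a
  · subst v
    by_cases hj : j = 2
    · refine ⟨_, (((IsRainbowWalkIn.nil ∅ a).cons (hK hb ha hba) ?_).cons
        (hK hx₀ hb hbx.symm) ?_).mono ?_⟩ <;>
      simp [hc _ hx₀ _ hb, hc _ hb _ ha, cliqueColour_comm b a, cliqueColour_x₀_of_ne_a hax hba,
        cliqueColour_a_of_ne_x₀ hax hbx, hj, Set.insert_subset_iff]
    · exact ⟨_, ((IsRainbowWalkIn.nil ∅ a).cons hxa (by simp)).mono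
        (by simp [hc _ hx₀ _ ha, cliqueColour_x₀_a, Ne.symm hj])⟩
  · by_cases hj : j = 3
    · refine ⟨_, (((IsRainbowWalkIn.nil ∅ v).cons (hK ha hv (Ne.symm hva)) ?_).cons
        hxa ?_).mono ?_⟩ <;>
      simp [hc _ hx₀ _ ha, hc _ ha _ hv, cliqueColour_x₀_a, cliqueColour_a_of_ne_x₀ hax hvx, hj,
        Set.insert_subset_iff]
    · exact ⟨_, ((IsRainbowWalkIn.nil ∅ v).cons (hK hx₀ hv (Ne.symm hvx)) (by simp)).mono
        (by simp [hc _ hx₀ _ hv, cliqueColour_x₀_of_ne_a hax hva, Ne.symm hj])⟩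

end CliqueColouring

section SplitColouring

variable {V : Type*} [DecidableEq V] {K : Set V} {x₀ a : V} {y : Fin 4 → V} {f : V → V}
  {s u v : V}

open Classical in
/-- The colour of an edge `su` with `s ∉ K`, `u ∈ K`: the pendant edge at `y i` gets colour `i`,
and any other vertex outside `K` sees colour 0 towards `f s` and colour 1 towards the rest. -/
noncomputable def outColour (y : Fin 4 → V) (f : V → V) (s u : V) : ℕ :=
  if s ∈ Set.range y then (Function.invFun y s).val else if u = f s then 0 else 1

open Classical in
noncomputable def splitColouring (K : Set V) (x₀ a : V) (y : Fin 4 → V) (f : V → V)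
    (u v : V) : ℕ :=
  if u ∈ K then (if v ∈ K then cliqueColour x₀ a u v else outColour y f v u)
  else if v ∈ K then outColour y f u v else 0 -- no edge joins two vertices outside `K`

lemma splitColouring_comm (u v : V) :
    splitColouring K x₀ a y f u v = splitColouring K x₀ a y f v u := by
  unfold splitColouring; split_ifs <;> first | rfl | exact cliqueColour_comm u v

noncomputable def splitEdgeColouring (K : Set V) (x₀ a : V) (y : Fin 4 → V) (f : V → V) :
    Sym2 V → ℕ :=
  Sym2.lift ⟨splitColouring K x₀ a y f, splitColouring_comm⟩

lemma splitEdgeColouring_lt_four (e : Sym2 V) : splitEdgeColouring K x₀ a y f e < 4 := by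
  induction e using Sym2.ind with
  | _ u v =>
    have := cliqueColour_eq_zero_or_two_or_three (x₀ := x₀) (a := a) u v
    simp only [splitEdgeColouring, Sym2.lift_mk, splitColouring, outColour]
    split_ifs <;> omega

lemma splitEdgeColouring_of_mem (hu : u ∈ K) (hv : v ∈ K) :
    splitEdgeColouring K x₀ a y f s(u, v) = cliqueColour x₀ a u v := by
  simp [splitEdgeColouring, splitColouring, hu, hv]

lemma splitEdgeColouring_pendant (hy : Function.Injective y) {i : Fin 4} (hyK : y i ∉ K)
    (hx₀ : x₀ ∈ K) : splitEdgeColouring K x₀ a y f s(y i, x₀) = i := by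
  simp [splitEdgeColouring, splitColouring, outColour, hyK, hx₀,
    Function.leftInverse_invFun hy i]

lemma splitEdgeColouring_of_not_mem (hs : s ∉ K) (hsy : s ∉ Set.range y) (hu : u ∈ K) :
    splitEdgeColouring K x₀ a y f s(s, u) = if u = f s then 0 else 1 := by
  simp [splitEdgeColouring, splitColouring, outColour, hs, hsy, hu]

end SplitColouring

structure SplitConfig {V : Type*} (G : SimpleGraph V) (K : Set V) (x₀ a b : V) (y : Fin 4 → V)
    (f : V → V) : Prop where
  isClique : G.IsClique K
  mem_of_adj : ∀ ⦃s⦄, s ∉ K → ∀ ⦃w⦄, G.Adj s w → w ∈ K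
  x₀_mem : x₀ ∈ K
  a_mem : a ∈ K
  b_mem : b ∈ K
  a_ne_x₀ : a ≠ x₀
  b_ne_x₀ : b ≠ x₀
  b_ne_a : b ≠ a
  injective_y : Function.Injective y
  y_not_mem : ∀ i, y i ∉ K
  adj_y : ∀ i, G.Adj (y i) x₀
  adj_f : ∀ s, G.Adj s (f s)
  exists_adj_ne : ∀ ⦃s⦄, s ∉ K → s ∉ Set.range y → ∃ w, G.Adj s w ∧ w ≠ f s

namespace SplitConfig

variable {V : Type*} [DecidableEq V] {G : SimpleGraph V} {K : Set V} {x₀ a b : V}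
  {y : Fin 4 → V} {f : V → V} {s t u v : V}

local notation "χ" => splitEdgeColouring K x₀ a y f

lemma exists_isRainbowWalkIn_two_three (H : SplitConfig G K x₀ a b y f) (hu : u ∈ K)
    (hv : v ∈ K) : ∃ p : G.Walk u v, IsRainbowWalkIn χ {2, 3} p :=
  _root_.exists_isRainbowWalkIn_two_three H.isClique
    (fun _ hu _ hv => splitEdgeColouring_of_mem hu hv) H.x₀_mem H.a_ne_x₀ hu hv

lemma exists_isRainbowWalkIn_compl (H : SplitConfig G K x₀ a b y f) (j : ℕ) (hv : v ∈ K) :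
    ∃ p : G.Walk x₀ v, IsRainbowWalkIn χ {1, j}ᶜ p :=
  _root_.exists_isRainbowWalkIn_compl H.isClique
    (fun _ hu _ hv => splitEdgeColouring_of_mem hu hv) H.x₀_mem H.a_mem H.a_ne_x₀ H.b_mem
    H.b_ne_x₀ H.b_ne_a j hv

lemma colour_pendant (H : SplitConfig G K x₀ a b y f) (i : Fin 4) : χ s(y i, x₀) = i :=
  splitEdgeColouring_pendant H.injective_y (H.y_not_mem i) H.x₀_mem

lemma colour_f (H : SplitConfig G K x₀ a b y f) (hs : s ∉ K) (hsy : s ∉ Set.range y) :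
    χ s(s, f s) = 0 := by
  simp [splitEdgeColouring_of_not_mem hs hsy (H.mem_of_adj hs (H.adj_f s))]

lemma exists_adj_colour_eq_one (H : SplitConfig G K x₀ a b y f) (hs : s ∉ K)
    (hsy : s ∉ Set.range y) : ∃ w ∈ K, G.Adj s w ∧ χ s(s, w) = 1 := by
  obtain ⟨w, hw, hwf⟩ := H.exists_adj_ne hs hsy
  have hwK := H.mem_of_adj hs hw
  exact ⟨w, hwK, hw, by simp [splitEdgeColouring_of_not_mem hs hsy hwK, hwf]⟩

lemma rainbowJoined_of_mem_of_mem (H : SplitConfig G K x₀ a b y f) (hu : u ∈ K) (hv : v ∈ K) :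
    RainbowJoined G χ u v :=
  (H.exists_isRainbowWalkIn_two_three hu hv).elim fun _ hp => hp.rainbowJoined

lemma rainbowJoined_pendant_of_mem (H : SplitConfig G K x₀ a b y f) (i : Fin 4) (hv : v ∈ K) :
    RainbowJoined G χ (y i) v := by
  obtain ⟨p, hp⟩ := H.exists_isRainbowWalkIn_compl i hv
  exact (hp.cons (H.adj_y i) (by simp [H.colour_pendant])).rainbowJoined

lemma rainbowJoined_pendant_pendant (H : SplitConfig G K x₀ a b y f) (i j : Fin 4) :
    RainbowJoined G χ (y i) (y j) := by
  obtain rfl | hij := eq_or_ne i j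
  · exact .refl _
  refine rainbowJoined_of_adj_of_adj (H.adj_y i) (H.adj_y j) (.nil ∅ x₀) (by simp) (by simp) ?_
  simpa [H.colour_pendant] using Fin.val_injective.ne hij

lemma rainbowJoined_of_not_mem_of_mem (H : SplitConfig G K x₀ a b y f) (hs : s ∉ K)
    (hsy : s ∉ Set.range y) (hv : v ∈ K) : RainbowJoined G χ s v := by
  obtain ⟨w, hwK, hw, hcw⟩ := H.exists_adj_colour_eq_one hs hsy
  obtain ⟨p, hp⟩ := H.exists_isRainbowWalkIn_two_three hwK hv
  exact (hp.cons hw (by simp [hcw])).rainbowJoined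

lemma rainbowJoined_pendant_of_not_mem (H : SplitConfig G K x₀ a b y f) (i : Fin 4)
    (hs : s ∉ K) (hsy : s ∉ Set.range y) : RainbowJoined G χ (y i) s := by
  obtain hi | hi := eq_or_ne (i : ℕ) 1
  · obtain ⟨p, hp⟩ := H.exists_isRainbowWalkIn_two_three H.x₀_mem
      (H.mem_of_adj hs (H.adj_f s))
    exact rainbowJoined_of_adj_of_adj (H.adj_y i) (H.adj_f s) hp
      (by simp [H.colour_pendant, hi]) (by simp [H.colour_f hs hsy])
      (by simp [H.colour_pendant, H.colour_f hs hsy, hi])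
  · obtain ⟨w, hwK, hw, hcw⟩ := H.exists_adj_colour_eq_one hs hsy
    obtain ⟨p, hp⟩ := H.exists_isRainbowWalkIn_compl i hwK
    exact rainbowJoined_of_adj_of_adj (H.adj_y i) hw hp (by simp [H.colour_pendant])
      (by simp [hcw]) (by simp [H.colour_pendant, hcw, hi])

lemma rainbowJoined_of_not_mem_of_not_mem (H : SplitConfig G K x₀ a b y f) (hs : s ∉ K)
    (hsy : s ∉ Set.range y) (ht : t ∉ K) (hty : t ∉ Set.range y) : RainbowJoined G χ s t := by
  obtain ⟨w, hwK, hw, hcw⟩ := H.exists_adj_colour_eq_one hs hsy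
  obtain ⟨p, hp⟩ := H.exists_isRainbowWalkIn_two_three hwK (H.mem_of_adj ht (H.adj_f t))
  exact rainbowJoined_of_adj_of_adj hw (H.adj_f t) hp (by simp [hcw])
    (by simp [H.colour_f ht hty]) (by simp [hcw, H.colour_f ht hty])

lemma isRainbow (H : SplitConfig G K x₀ a b y f) : IsRainbow G χ := by
  have classify : ∀ w, w ∈ K ∨ (∃ i, y i = w) ∨ (w ∉ K ∧ w ∉ Set.range y) := fun w => by
    by_cases w ∈ K <;> by_cases w ∈ Set.range y <;> simp_all
  intro u v
  rcases classify u with hu | ⟨i, rfl⟩ | ⟨hu, huy⟩ <;>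
    rcases classify v with hv | ⟨j, rfl⟩ | ⟨hv, hvy⟩
  exacts [H.rainbowJoined_of_mem_of_mem hu hv, (H.rainbowJoined_pendant_of_mem j hu).symm,
    (H.rainbowJoined_of_not_mem_of_mem hv hvy hu).symm, H.rainbowJoined_pendant_of_mem i hv,
    H.rainbowJoined_pendant_pendant i j, H.rainbowJoined_pendant_of_not_mem i hv hvy,
    H.rainbowJoined_of_not_mem_of_mem hu huy hv, (H.rainbowJoined_pendant_of_not_mem j hu huy).symm,
    H.rainbowJoined_of_not_mem_of_not_mem hu huy hv hvy]

lemma rainbowColorable (H : SplitConfig G K x₀ a b y f) : RainbowColorable G 4 :=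
  ⟨χ, fun e _ => splitEdgeColouring_lt_four e, H.isRainbow⟩

end SplitConfig
lemma SimpleGraph.exists_adj_ne_of_degree_ne_one {V : Type*} {G : SimpleGraph V} {v w : V}
    [Fintype (G.neighborSet v)] (hv : G.degree v ≠ 1) (hw : G.Adj v w) :
    ∃ w', G.Adj v w' ∧ w' ≠ w := by
  by_contra! h
  exact hv (degree_eq_one_iff_existsUnique_adj.2 ⟨w, hw, h⟩)

lemma SimpleGraph.IsClique.not_mem_of_forall_adj_eq {V : Type*} {G : SimpleGraph V} {K : Set V}
    {v x a b : V} (hK : G.IsClique K) (hv : ∀ w, G.Adj v w → w = x) (ha : a ∈ K) (hb : b ∈ K)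
    (hax : a ≠ x) (hbx : b ≠ x) (hab : a ≠ b) : v ∉ K := by
  intro hvK
  have key : ∀ w ∈ K, w ≠ x → w = v := fun w hw hwx => by
    by_contra hne; exact hwx (hv w (hK hvK hw (Ne.symm hne)))
  exact hab ((key a ha hax).trans (key b hb hbx).symm)

theorem stmt10_general {V : Type*} [Fintype V] (G : SimpleGraph V) [DecidableRel G.Adj]
    (hconn : G.Connected)
    (K : Set V) (hK : G.IsClique K) (hI : IsIndepSet' G Kᶜ)
    (h3 : 3 ≤ K.ncard)
    (x₀ : V) (hx₀ : x₀ ∈ K)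
    (y : Fin 4 → V) (hyinj : Function.Injective y)
    (hpend : ∀ i, G.degree (y i) = 1)
    (hadj : ∀ i, G.Adj x₀ (y i))
    (hall : ∀ v : V, G.degree v = 1 → ∃ i, v = y i) :
    rc G = 4 := by
  classical
  have hy_adj : ∀ i w, G.Adj (y i) w → w = x₀ := fun i _ hw =>
    (degree_eq_one_iff_existsUnique_adj.1 (hpend i)).unique hw (hadj i).symm
  obtain ⟨a, ⟨ha, hax⟩, b, ⟨hb, hbx⟩, hab⟩ := (Set.one_lt_ncard (s := K \ {x₀})).1
    (by rw [Set.ncard_sdiff_singleton_of_mem hx₀]; omega)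
  have : Nontrivial V := ⟨⟨x₀, y 0, (hadj 0).ne⟩⟩
  choose f hf using hconn.preconnected.exists_adj_of_nontrivial
  have H : SplitConfig G K x₀ a b y f :=
    { isClique := hK
      mem_of_adj := fun s hs w hw => by_contra fun hwK => hI s hs w hwK hw
      x₀_mem := hx₀
      a_mem := ha
      b_mem := hb
      a_ne_x₀ := hax
      b_ne_x₀ := hbx
      b_ne_a := hab.symm
      injective_y := hyinj
      y_not_mem := fun i => hK.not_mem_of_forall_adj_eq (hy_adj i) ha hb hax hbx hab
      adj_y := fun i => (hadj i).symm
      adj_f := hf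
      exists_adj_ne := fun s _ hsy => exists_adj_ne_of_degree_ne_one
        (fun h => hsy (let ⟨i, hi⟩ := hall s h; ⟨i, hi.symm⟩)) (hf s) }
  exact rc_eq_of_rainbowColorable H.rainbowColorable fun k hk =>
    le_of_rainbowColorable_of_pendants hyinj hadj hy_adj hk

/-- A connected split graph with maximal clique `K`, `|K| ≥ 3`, and exactly four pendant
vertices, all adjacent to a single clique vertex `x₀`, has rainbow connection number 4. -/
theorem stmt10 {V : Type*} [Fintype V] (G : SimpleGraph V) [DecidableRel G.Adj]
    (hconn : G.Connected)
    (K : Set V) (hK : G.IsClique K) (hI : IsIndepSet' G Kᶜ)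
    (hmax : ∀ v ∉ K, ¬ G.IsClique (insert v K)) (h3 : 3 ≤ K.ncard)
    (x₀ : V) (hx₀ : x₀ ∈ K)
    (y : Fin 4 → V) (hyinj : Function.Injective y)
    (hpend : ∀ i, G.degree (y i) = 1)
    (hadj : ∀ i, G.Adj x₀ (y i))
    (hall : ∀ v : V, G.degree v = 1 → ∃ i, v = y i) :
    rc G = 4 :=
  stmt10_general G hconn K hK hI h3 x₀ hx₀ y hyinj hpend hadj hall
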